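/- Let n ≥ 3. In the group algebra ℝ[S_n], let B = Σ_{σ ∈ S_n} des(σ)·σ. Then B·(B − C(n,2)(n-1)!·e)·(B + (n-1)!·e) = 0, where e is the unit of the group algebra. -/

import Mathlib

/-!
Let `E = ∑ σ` be the sum of all permutations. Since `E` absorbs every permutation,
`B * E = (∑ σ, des σ) • E = C(n,2) (n-1)! • E`. The coefficient of `τ` in `B * B` counts pairs of
a descent `i` of `σ` and a descent `j` of `σ⁻¹ τ`, i.e. permutations `σ` with `σ (i+1) < σ i` in
which the value `τ (j+1)` sits before `τ j`. Pairing `σ` with `σ ∘ (i i+1)` shows that this count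
is `n!/4 - (n-2)!/2`, plus `(n-2)!` when `j` is an ascent of `τ`; hence
`B * B = β • E - (n-1)! • B` for a constant `β`. So `B (B + (n-1)!) = β E`, which is annihilated
by `B - C(n,2) (n-1)!`.
-/

open Finset Equiv Nat

/-- The number of descents of a permutation of `Fin n`. -/
def desCount {n : ℕ} (σ : Equiv.Perm (Fin n)) : ℕ :=
  (Finset.univ.filter
    (fun p : Fin n × Fin n => (p.2 : ℕ) = (p.1 : ℕ) + 1 ∧ σ p.2 < σ p.1)).card

lemma card_filter_mul_two_eq_card {β : Type*} (s : Finset β) (p : β → Prop) [DecidablePred p]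
    {f : β → β} (hf : Function.Involutive f) (hs : ∀ x ∈ s, f x ∈ s)
    (hp : ∀ x ∈ s, p (f x) ↔ ¬ p x) :
    #(s.filter p) * 2 = #s := by
  have hswap : #(s.filter p) = #(s.filter (¬ p ·)) := by
    refine card_nbij' f f (fun x hx => ?_) (fun x hx => ?_) (fun x _ => hf x) (fun x _ => hf x)
    all_goals
      simp only [coe_filter, Set.mem_ofPred_eq] at hx ⊢
      refine ⟨hs x hx.1, ?_⟩
      simpa [hp x hx.1] using hx.2
  have := card_filter_add_card_filter_not (s := s) p
  omega

section LinearOrder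

variable {α : Type*} [LinearOrder α]

lemma swap_apply_lt_swap_apply_of_covBy {a a' p q : α} (ha : a ⋖ a') (hqp : q < p)
    (hne : ¬ (q = a ∧ p = a')) : swap a a' q < swap a a' p := by
  have := ha.lt
  rw [swap_apply_def, swap_apply_def]
  split_ifs <;> subst_vars <;> simp_all
  all_goals first
    | exact this.trans hqp
    | exact hqp.trans this
    | exact (ha.ge_of_gt hqp).lt_of_ne' ‹_›
    | exact (ha.le_of_lt hqp).lt_of_ne ‹_›

lemma mul_swap_apply_lt_mul_swap_apply_iff (σ : Perm α) {a b : α} (hab : a ≠ b) :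
    (σ * swap a b) b < (σ * swap a b) a ↔ ¬ σ b < σ a := by
  simp only [Perm.mul_apply, swap_apply_left, swap_apply_right]
  exact (Ne.le_iff_lt (σ.injective.ne hab)).symm.trans not_lt.symm

lemma mul_swap_inv_apply_lt_inv_apply {a a' x y : α} (ha : a ⋖ a') {σ : Perm α}
    (h : σ⁻¹ y < σ⁻¹ x ∧ ¬ (σ a = y ∧ σ a' = x)) :
    (σ * swap a a')⁻¹ y < (σ * swap a a')⁻¹ x ∧
      ¬ ((σ * swap a a') a = y ∧ (σ * swap a a') a' = x) := by
  simp only [mul_inv_rev, swap_inv, Perm.mul_apply, swap_apply_left, swap_apply_right]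
  refine ⟨swap_apply_lt_swap_apply_of_covBy ha h.1 fun hpos => h.2 ?_, fun hpos => ?_⟩
  · rw [Perm.inv_eq_iff_eq, Perm.inv_eq_iff_eq] at hpos
    exact ⟨hpos.1.symm, hpos.2.symm⟩
  · exact lt_asymm (by simpa [← hpos.1, ← hpos.2] using h.1) ha.lt

end LinearOrder

section Perm

variable {α : Type*} [Fintype α]

lemma card_perm_apply_eq_and_apply_eq [DecidableEq α] {a b x y : α} (hab : a ≠ b)
    (hxy : x ≠ y) :
    #{σ : Perm α | σ a = x ∧ σ b = y} = (Fintype.card α - 2)! := by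
  obtain ⟨ρ, hρa, hρb⟩ :=
    MulAction.is_two_pretransitive_iff.mp (Perm.isMultiplyPretransitive α 2) hab hxy
  let p : α → Prop := (· ∉ ({a, b} : Finset α))
  calc #{σ : Perm α | σ a = x ∧ σ b = y}
      = Fintype.card {σ : Perm α // ∀ c, ¬ p c → σ c = c} := by
        rw [Fintype.card_subtype]
        refine card_equiv (Equiv.mulLeft ρ⁻¹) fun σ => ?_
        simp only [p, ← hρa, ← hρb, Perm.smul_def, mem_insert, mem_singleton, not_not, or_imp,
          forall_and, forall_eq, coe_mulLeft, Perm.mul_apply, Perm.inv_def, symm_apply_eq,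
          mem_filter, mem_univ, true_and]
    _ = Fintype.card (Perm {c // p c}) :=
        (Fintype.card_congr (Perm.subtypeEquivSubtypePerm p)).symm
    _ = (Fintype.card α - 2)! := by
        rw [Fintype.card_perm, Fintype.card_subtype_compl, Fintype.card_coe, card_pair hab]

variable [LinearOrder α]

lemma card_perm_apply_lt_apply_mul_two {a b : α} (hab : a ≠ b) :
    #{σ : Perm α | σ b < σ a} * 2 = (Fintype.card α)! := by
  rw [← Fintype.card_perm]
  exact card_filter_mul_two_eq_card _ _ (f := (· * swap a b)) (fun σ => by simp [mul_assoc])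
    (by simp) fun σ _ => mul_swap_apply_lt_mul_swap_apply_iff σ hab

lemma card_perm_inv_apply_lt_inv_apply_mul_two {x y : α} (hxy : x ≠ y) :
    #{σ : Perm α | σ⁻¹ y < σ⁻¹ x} * 2 = (Fintype.card α)! := by
  rw [← card_perm_apply_lt_apply_mul_two hxy]
  congr 1
  exact card_equiv (Equiv.inv _) (by simp)

lemma card_perm_apply_lt_and_inv_apply_lt {a a' x y : α} (ha : a ⋖ a') (hxy : x ≠ y) :
    (#{σ : Perm α | σ a' < σ a ∧ σ⁻¹ y < σ⁻¹ x} : ℝ) =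
      (Fintype.card α)! / 4 - (Fintype.card α - 2)! / 2 +
        if x < y then ((Fintype.card α - 2)! : ℝ) else 0 := by
  set C : Finset (Perm α) := {σ | σ⁻¹ y < σ⁻¹ x}
  set D : Perm α → Prop := fun σ => σ a' < σ a
  set H : Perm α → Prop := fun σ => σ a = y ∧ σ a' = x
  have hHC : ∀ σ, H σ → σ ∈ C := by
    rintro σ ⟨hy, hx⟩
    simpa [C, Perm.inv_eq_iff_eq, ← hy, ← hx] using ha.lt
  have hH : #(C.filter H) = (Fintype.card α - 2)! := by
    rw [← card_perm_apply_eq_and_apply_eq ha.ne hxy.symm]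
    congr 1
    ext σ
    simp only [mem_filter, mem_univ, true_and]
    exact ⟨fun h => h.2, fun h => ⟨hHC σ h, h⟩⟩
  have hsplit : #{σ : Perm α | σ a' < σ a ∧ σ⁻¹ y < σ⁻¹ x} =
      #((C.filter H).filter D) + #((C.filter (¬ H ·)).filter D) := by
    rw [filter_comm (p := H), filter_comm (p := (¬ H ·)), card_filter_add_card_filter_not]
    congr 1; ext σ; simp [C, D, and_comm]
  have hpattern : #((C.filter H).filter D) = if x < y then #(C.filter H) else 0 := by
    split_ifs with hlt
    · refine congrArg card (filter_true_of_mem fun σ hσ => ?_)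
      rw [mem_filter] at hσ
      show σ a' < σ a
      rwa [hσ.2.1, hσ.2.2]
    · refine card_eq_zero.mpr (filter_eq_empty_iff.mpr fun σ hσ => ?_)
      rw [mem_filter] at hσ
      show ¬ σ a' < σ a
      rwa [hσ.2.1, hσ.2.2]
  -- Right multiplication by `(a a')` pairs off the permutations of `C` outside the pattern `H`,
  -- exactly one of each pair having a descent at `a`.
  have hoff : #((C.filter (¬ H ·)).filter D) * 2 = #(C.filter (¬ H ·)) := by
    refine card_filter_mul_two_eq_card _ _ (f := (· * swap a a')) (fun σ => by simp [mul_assoc])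
      (fun σ hσ => ?_) fun σ _ => mul_swap_apply_lt_mul_swap_apply_iff σ ha.ne
    simp only [C, mem_filter, mem_univ, true_and] at hσ ⊢
    exact mul_swap_inv_apply_lt_inv_apply ha hσ
  have hC := card_filter_add_card_filter_not (s := C) H
  have hC2 : #C * 2 = (Fintype.card α)! := card_perm_inv_apply_lt_inv_apply_mul_two hxy
  rw [hH] at hC
  rw [hsplit, hpattern, hH]
  rify at hoff hC hC2
  split_ifs <;> push_cast <;> linarith

end Perm

def adjacentPairs (n : ℕ) : Finset (Fin n × Fin n) := {p | (p.2 : ℕ) = p.1 + 1}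

section adjacentPairs

variable {n : ℕ}

lemma covBy_of_mem_adjacentPairs {p : Fin n × Fin n} (hp : p ∈ adjacentPairs n) :
    p.1 ⋖ p.2 := by
  simp only [adjacentPairs, mem_filter, mem_univ, true_and] at hp
  exact ⟨by rw [Fin.lt_def]; omega, fun c h1 h2 => by rw [Fin.lt_def] at h1 h2; omega⟩

lemma card_adjacentPairs : #(adjacentPairs n) = n - 1 := by
  rw [← card_range (n - 1)]
  refine card_bij (fun p _ => (p.1 : ℕ)) (fun p hp => ?_) (fun p hp q hq h => ?_) fun k hk => ?_
  all_goals simp only [adjacentPairs, mem_filter, mem_univ, true_and, mem_range] at *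
  · omega
  · ext <;> simp only [Fin.val_inj] at * <;> omega
  · exact ⟨(⟨k, by omega⟩, ⟨k + 1, by omega⟩), rfl, rfl⟩

lemma desCount_eq_card_filter (σ : Perm (Fin n)) :
    desCount σ = #((adjacentPairs n).filter fun p => σ p.2 < σ p.1) := by
  rw [desCount, adjacentPairs, filter_filter]

lemma desCount_eq_sum (σ : Perm (Fin n)) :
    (desCount σ : ℝ) = ∑ p ∈ adjacentPairs n, if σ p.2 < σ p.1 then 1 else 0 := by
  rw [desCount_eq_card_filter, card_filter]
  push_cast
  rfl

lemma card_filter_ascents_add_desCount (τ : Perm (Fin n)) :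
    #((adjacentPairs n).filter fun p => τ p.1 < τ p.2) + desCount τ = n - 1 := by
  rw [desCount_eq_card_filter, ← card_adjacentPairs,
    ← card_filter_add_card_filter_not (s := adjacentPairs n) fun p => τ p.1 < τ p.2]
  congr 2
  ext p
  simp only [mem_filter, not_lt, and_congr_right_iff]
  exact fun hp => (Ne.le_iff_lt (τ.injective.ne (covBy_of_mem_adjacentPairs hp).ne')).symm

end adjacentPairs

lemma sum_desCount (n : ℕ) :
    ∑ σ : Perm (Fin n), (desCount σ : ℝ) = n.choose 2 * (n - 1)! := by
  have hhalf : ∀ p ∈ adjacentPairs n,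
      (#{σ : Perm (Fin n) | σ p.2 < σ p.1} : ℝ) = n ! / 2 := by
    intro p hp
    have := card_perm_apply_lt_apply_mul_two (covBy_of_mem_adjacentPairs hp).ne
    rw [Fintype.card_fin] at this
    rify at this
    linarith
  calc ∑ σ : Perm (Fin n), (desCount σ : ℝ)
      = ∑ p ∈ adjacentPairs n, (#{σ : Perm (Fin n) | σ p.2 < σ p.1} : ℝ) := by
        simp_rw [desCount_eq_sum]
        rw [sum_comm]
        simp
    _ = (n - 1 : ℕ) * n ! / 2 := by
        rw [sum_congr rfl hhalf, sum_const, card_adjacentPairs, nsmul_eq_mul, mul_div_assoc]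
    _ = n.choose 2 * (n - 1)! := by
        rcases n with _ | n
        · simp
        · rw [Nat.cast_choose_two, Nat.factorial_succ]
          push_cast
          ring

lemma sum_desCount_mul_desCount {n : ℕ} (hn : 2 ≤ n) (τ : Perm (Fin n)) :
    ∑ σ : Perm (Fin n), (desCount σ : ℝ) * desCount (σ⁻¹ * τ) =
      (n - 1) ^ 2 * (n ! / 4 + (n - 2)! / 2) - (n - 1)! * desCount τ := by
  set c : ℝ := n ! / 4 - (n - 2)! / 2
  have hasc := card_filter_ascents_add_desCount τ
  rify [show 1 ≤ n by omega] at hasc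
  calc ∑ σ : Perm (Fin n), (desCount σ : ℝ) * desCount (σ⁻¹ * τ)
      = ∑ p ∈ adjacentPairs n, ∑ q ∈ adjacentPairs n,
          (#{σ : Perm (Fin n) | σ p.2 < σ p.1 ∧ σ⁻¹ (τ q.2) < σ⁻¹ (τ q.1)} : ℝ) := by
        simp_rw [desCount_eq_sum, sum_mul_sum, ite_zero_mul_ite_zero, mul_one]
        rw [sum_comm]
        refine sum_congr rfl fun p _ => ?_
        rw [sum_comm]
        refine sum_congr rfl fun q _ => ?_
        rw [sum_boole]
        rfl
    _ = ∑ p ∈ adjacentPairs n, ∑ q ∈ adjacentPairs n,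
          (c + if τ q.1 < τ q.2 then ((n - 2)! : ℝ) else 0) := by
        refine sum_congr rfl fun p hp => sum_congr rfl fun q hq => ?_
        rw [card_perm_apply_lt_and_inv_apply_lt (covBy_of_mem_adjacentPairs hp)
          (τ.injective.ne (covBy_of_mem_adjacentPairs hq).ne), Fintype.card_fin]
    _ = (n - 1) ^ 2 * c +
          (n - 1) * (n - 2)! * #((adjacentPairs n).filter fun q => τ q.1 < τ q.2) := by
        simp only [sum_add_distrib, sum_const, sum_ite, nsmul_eq_mul,
          card_adjacentPairs, Nat.cast_sub (by omega : 1 ≤ n), Nat.cast_one]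
        ring
    _ = (n - 1) ^ 2 * (n ! / 4 + (n - 2)! / 2) - (n - 1)! * desCount τ := by
        have hfact : ((n - 1)! : ℝ) = (n - 1) * (n - 2)! := by
          rw [← Nat.mul_factorial_pred (by omega : n - 1 ≠ 0), Nat.sub_sub]
          push_cast [Nat.cast_sub (by omega : 1 ≤ n)]
          rfl
        rw [hfact]
        linear_combination ((n : ℝ) - 1) * (n - 2)! * hasc

lemma MonoidAlgebra.sum_single_mul_sum_single {G R : Type*} [Group G] [Fintype G] [Semiring R]
    (f g : G → R) :
    (∑ σ, single σ (f σ)) * (∑ σ, single σ (g σ)) =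
      ∑ τ, single τ (∑ σ, f σ * g (σ⁻¹ * τ)) := by
  have hσ : ∀ σ, ∑ π, single (σ * π) (f σ * g π) =
      ∑ τ, single τ (f σ * g (σ⁻¹ * τ)) :=
    fun σ => Fintype.sum_equiv (Equiv.mulLeft σ) _ _ fun π => by simp
  simp_rw [sum_mul_sum, single_mul_single, hσ]
  rw [sum_comm]
  exact sum_congr rfl fun τ _ => (map_sum (singleAddHom τ) _ _).symm

lemma mul_sub_smul_mul_add_smul_eq_zero {R A : Type*} [CommRing R] [Ring A] [Algebra R A]
    {B E : A} {lam mu beta : R} (hBB : B * B = beta • E - mu • B) (hBE : B * E = lam • E) :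
    B * (B - lam • 1) * (B + mu • 1) = 0 := by
  calc B * (B - lam • 1) * (B + mu • 1) = (B - lam • 1) * (B * B + mu • B) := by
        simp only [mul_sub, sub_mul, mul_add, smul_mul_assoc, mul_smul_comm, mul_one, one_mul,
          mul_assoc]
    _ = beta • (B * E - lam • E) := by
        rw [hBB, sub_add_cancel, sub_mul, mul_smul_comm, smul_mul_assoc, one_mul, smul_sub,
          smul_comm]
    _ = 0 := by rw [hBE, sub_self, smul_zero]

theorem stmt_16 (n : ℕ) (hn : 3 ≤ n)
    (B : MonoidAlgebra ℝ (Equiv.Perm (Fin n)))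
    (hB : B = ∑ σ : Equiv.Perm (Fin n), MonoidAlgebra.single σ ((desCount σ : ℝ))) :
    B * (B - ((n.choose 2 * (n - 1).factorial : ℕ) : ℝ) • 1) *
      (B + (((n - 1).factorial : ℕ) : ℝ) • 1) = 0 := by
  set E : MonoidAlgebra ℝ (Perm (Fin n)) := ∑ σ, MonoidAlgebra.single σ 1
  have hBE : B * E = ((n.choose 2 * (n - 1).factorial : ℕ) : ℝ) • E := by
    rw [hB, MonoidAlgebra.sum_single_mul_sum_single, smul_sum]
    simp only [mul_one, sum_desCount, MonoidAlgebra.smul_single', Nat.cast_mul]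
  have hBB : B * B = ((n - 1) ^ 2 * (n ! / 4 + (n - 2)! / 2) : ℝ) • E -
      (((n - 1).factorial : ℕ) : ℝ) • B := by
    rw [hB, MonoidAlgebra.sum_single_mul_sum_single, smul_sum, smul_sum, ← sum_sub_distrib]
    simp only [sum_desCount_mul_desCount (by omega : 2 ≤ n), MonoidAlgebra.smul_single', mul_one,
      MonoidAlgebra.single_sub]
  exact mul_sub_smul_mul_add_smul_eq_zero hBB hBE
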